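/- Σ_{δ ∈ D_{2n}} ∏_{i=1}^n q^{d_i(δ) − 2i} [d_i(δ) − 2i + 1]_q = ∏_{k=1}^n [2k−1]_q, where D_{2n} is the set of Dyck paths of length 2n, d_i(δ) is the position of the i-th down step of δ, and [m]_q = 1+q+...+q^{m-1}. -/

import Mathlib

open Finset

/-- Steps of a Motzkin path: up, level, down. -/
inductive Step | U | L | D
deriving DecidableEq

instance instFintypeStep : Fintype Step where
  elems := {Step.U, Step.L, Step.D}
  complete := by intro x; cases x <;> simp

/-- `μ` is a Motzkin path: every prefix has at least as many `U`'s as `D`'s, and the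
total numbers of `U`'s and `D`'s agree. -/
def IsMotzkin {n : ℕ} (μ : Fin n → Step) : Prop :=
  (∀ k : Fin n, (Finset.univ.filter (fun j => j ≤ k ∧ μ j = Step.D)).card
      ≤ (Finset.univ.filter (fun j => j ≤ k ∧ μ j = Step.U)).card)
  ∧ (Finset.univ.filter (fun j => μ j = Step.U)).card
    = (Finset.univ.filter (fun j => μ j = Step.D)).card

/-- The height of the `i`-th step of `μ`: the larger of the two `y`-coordinates of
the step, i.e. `#{j ≤ i : μ j = U} − #{j < i : μ j = D}`. -/
def height {n : ℕ} (μ : Fin n → Step) (i : Fin n) : ℕ :=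
  (Finset.univ.filter (fun j => j ≤ i ∧ μ j = Step.U)).card
    - (Finset.univ.filter (fun j => j < i ∧ μ j = Step.D)).card

/-- Biane's word of an involution: `U` if `i < σ i`, `L` if `i = σ i`, `D` if `i > σ i`. -/
def bpath {n : ℕ} (σ : Equiv.Perm (Fin n)) (i : Fin n) : Step :=
  if i < σ i then Step.U else if σ i = i then Step.L else Step.D

/-- Biane's label of step `i`: `|{j ≥ i : σ j ≤ σ i}|`. -/
def blabel {n : ℕ} (σ : Equiv.Perm (Fin n)) (i : Fin n) : ℕ :=
  (Finset.univ.filter (fun j => i ≤ j ∧ σ j ≤ σ i)).card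

open scoped Classical
open Polynomial

/-- `μ` is a Dyck path: a Motzkin path with no level steps. -/
def IsDyck {n : ℕ} (μ : Fin n → Step) : Prop :=
  IsMotzkin μ ∧ ∀ i, μ i ≠ Step.L

/-- The (1-indexed) position of the `(i+1)`-st down step of `δ`. -/
def dpos {n : ℕ} (δ : Fin n → Step) (i : ℕ) : ℕ :=
  (((Finset.univ.filter (fun j => δ j = Step.D)).sort (· ≤ ·)).map
    (fun j => (j : ℕ) + 1)).getD i 0

/-- The `q`-integer `[m]_q = 1 + q + ⋯ + q^{m-1}`. -/
noncomputable def qint (m : ℕ) : Polynomial ℤ := ∑ i ∈ Finset.range m, X ^ i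

/-!
Read a path from left to right and record the height `h` from which each down step starts: the
`i`-th down step, at position `d_i`, starts at height `d_i - 2i + 1`, so its factor is
`q^(h-1) [h]_q`. Let `S(m, h)` (`dyckSum m h`) be the total weight of the paths of length `m`
that start at height `h` and end at height `0`. Splitting off the first step gives the transfer
recursion `S(m+1, h+1) = S(m, h+2) + q^h [h+1]_q S(m, h)`, whose solution is
`S(h + 2t, h) = q^(h choose 2) ∏_{k<t} [2k+1]_q ∏_{j<h} [2t+1+j]_q`;
the inductive step is the identity `[h+2t+1]_q = [h+1]_q + q^(h+1) [2t]_q`.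
Watson's identity is the case `h = 0`, `t = n`.
-/

theorem qint_add (a b : ℕ) : qint (a + b) = qint a + X ^ a * qint b := by
  simp only [qint, sum_range_add, pow_add, mul_sum]

theorem Nat.succ_choose_two (n : ℕ) : (n + 1).choose 2 = n.choose 2 + n := by
  rw [Nat.choose_succ_succ', Nat.choose_one_right, add_comm]

theorem sum_univ_step {M : Type*} [AddCommMonoid M] (f : Step → M) :
    ∑ s, f s = f Step.U + f Step.L + f Step.D := by
  simp [univ, Fintype.elems, add_assoc]

theorem Fin.sum_pi_succ_eq_sum_cons {α M : Type*} [Fintype α] [AddCommMonoid M] {m : ℕ}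
    (f : (Fin (m + 1) → α) → M) :
    ∑ x, f x = ∑ a, ∑ x : Fin m → α, f (Fin.cons a x) := by
  rw [← (Fin.consEquiv fun _ => α).sum_comp, Fintype.sum_prod_type]
  rfl

def IsDyckFrom {m : ℕ} (h : ℕ) (δ : Fin m → Step) : Prop :=
  (∀ k : Fin m, #{j | j ≤ k ∧ δ j = Step.D} ≤ #{j | j ≤ k ∧ δ j = Step.U} + h) ∧
    #{j | δ j = Step.U} + h = #{j | δ j = Step.D} ∧ ∀ i, δ i ≠ Step.L

theorem isDyck_iff_isDyckFrom_zero {m : ℕ} (δ : Fin m → Step) :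
    IsDyck δ ↔ IsDyckFrom 0 δ := by
  simp only [IsDyck, IsMotzkin, IsDyckFrom, add_zero, and_assoc]

theorem IsDyckFrom.le_length {m h : ℕ} {δ : Fin m → Step} (hδ : IsDyckFrom h δ) :
    h ≤ m := by
  have hUD := hδ.2.1
  have hD := card_le_univ (univ.filter fun j => δ j = Step.D)
  rw [Fintype.card_fin] at hD
  omega

theorem IsDyckFrom.two_mul_card_down {m h : ℕ} {δ : Fin m → Step} (hδ : IsDyckFrom h δ) :
    2 * #{j | δ j = Step.D} = m + h := by
  have hnotU : (univ.filter fun j => ¬ δ j = Step.U) = univ.filter fun j => δ j = Step.D :=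
    filter_congr fun j _ => by cases hj : δ j <;> simp [hδ.2.2 j] at hj ⊢
  have hUD := card_filter_add_card_filter_not (s := univ) fun j => δ j = Step.U
  rw [hnotU, card_univ, Fintype.card_fin] at hUD
  have := hδ.2.1
  omega

section Cons

variable {m : ℕ} (s : Step) (δ : Fin m → Step)

theorem card_filter_cons_eq (t : Step) :
    #{j | (Fin.cons s δ : Fin (m + 1) → Step) j = t} =
      (if s = t then 1 else 0) + #{j | δ j = t} := by
  rw [Fin.card_filter_univ_succ']
  simp

theorem card_filter_le_zero_cons_eq (t : Step) :
    #{j | j ≤ 0 ∧ (Fin.cons s δ : Fin (m + 1) → Step) j = t} = if s = t then 1 else 0 := by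
  rw [Fin.card_filter_univ_succ']
  simp [Fin.succ_ne_zero]

theorem card_filter_le_succ_cons_eq (k : Fin m) (t : Step) :
    #{j | j ≤ k.succ ∧ (Fin.cons s δ : Fin (m + 1) → Step) j = t} =
      (if s = t then 1 else 0) + #{j | j ≤ k ∧ δ j = t} := by
  rw [Fin.card_filter_univ_succ']
  simp

theorem isDyckFrom_cons_U (h : ℕ) :
    IsDyckFrom h (Fin.cons Step.U δ : Fin (m + 1) → Step) ↔ IsDyckFrom (h + 1) δ := by
  simp only [IsDyckFrom, Fin.forall_fin_succ, card_filter_le_zero_cons_eq,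
    card_filter_le_succ_cons_eq, card_filter_cons_eq, Fin.cons_zero, Fin.cons_succ, if_pos,
    reduceCtorEq, if_false, zero_add, zero_le, ne_eq, not_false_eq_true, true_and]
  exact and_congr (forall_congr' fun k => by omega) (and_congr (by omega) Iff.rfl)

theorem isDyckFrom_succ_cons_D (h : ℕ) :
    IsDyckFrom (h + 1) (Fin.cons Step.D δ : Fin (m + 1) → Step) ↔ IsDyckFrom h δ := by
  simp only [IsDyckFrom, Fin.forall_fin_succ, card_filter_le_zero_cons_eq,
    card_filter_le_succ_cons_eq, card_filter_cons_eq, Fin.cons_zero, Fin.cons_succ, if_pos,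
    reduceCtorEq, if_false, zero_add, le_add_iff_nonneg_left, zero_le, ne_eq,
    not_false_eq_true, true_and]
  exact and_congr (forall_congr' fun k => by omega) (and_congr (by omega) Iff.rfl)

theorem not_isDyckFrom_zero_cons_D :
    ¬ IsDyckFrom 0 (Fin.cons Step.D δ : Fin (m + 1) → Step) := by
  intro hδ
  have h0 := hδ.1 0
  simp only [card_filter_le_zero_cons_eq, if_pos, reduceCtorEq, if_false] at h0
  omega

theorem not_isDyckFrom_cons_L (h : ℕ) :
    ¬ IsDyckFrom h (Fin.cons Step.L δ : Fin (m + 1) → Step) :=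
  fun hδ => hδ.2.2 0 rfl

theorem filter_cons_eq_D :
    (univ.filter fun j => (Fin.cons s δ : Fin (m + 1) → Step) j = Step.D) =
      (if s = Step.D then insert 0 else id)
        ((univ.filter fun j => δ j = Step.D).map (Fin.succEmb m)) := by
  ext j
  cases j using Fin.cases <;> split_ifs <;> simp_all [Fin.succ_ne_zero]

end Cons

def downPositions {m : ℕ} (δ : Fin m → Step) : List ℕ :=
  ((univ.filter fun j => δ j = Step.D).sort).map fun j : Fin m => (j : ℕ) + 1

theorem dpos_eq_getD_downPositions {m : ℕ} (δ : Fin m → Step) (i : ℕ) :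
    dpos δ i = (downPositions δ).getD i 0 := by
  simp only [dpos, downPositions, List.pure_def, List.bind_eq_flatMap, ← List.map_eq_flatMap,
    List.map_map]
  rfl

theorem length_downPositions {m : ℕ} (δ : Fin m → Step) :
    (downPositions δ).length = #{j | δ j = Step.D} := by
  rw [downPositions, List.length_map, length_sort]

theorem downPositions_cons {m : ℕ} (s : Step) (δ : Fin m → Step) :
    downPositions (Fin.cons s δ : Fin (m + 1) → Step) =
      (if s = Step.D then [1] else []) ++ (downPositions δ).map (· + 1) := by
  have hsort := StrictMonoOn.map_finsetSort (Fin.succEmb m)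
    (univ.filter fun j => δ j = Step.D) (Fin.strictMono_succ.strictMonoOn _)
  rw [downPositions, downPositions, filter_cons_eq_D]
  split_ifs
  · rw [sort_insert _ (fun _ _ => Fin.zero_le _) (by simp [Fin.succ_ne_zero]), ← hsort]
    simp [Function.comp_def]
  · rw [id, ← hsort]
    simp [Function.comp_def]

/-- If `ds` lists the (1-indexed) positions of the down steps of a path started at height `h`,
its `i`-th entry `d` is a down step from height `h + d - 1 - 2i`, with factor
`q^(height - 1) [height]_q`. -/
noncomputable def downWeight (h : ℕ) (ds : List ℕ) : ℤ[X] :=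
  ∏ i ∈ range ds.length,
    X ^ (h + ds.getD i 0 - 2 * (i + 1)) * qint (h + ds.getD i 0 - 2 * (i + 1) + 1)

theorem downWeight_map_succ (h : ℕ) (ds : List ℕ) :
    downWeight h (ds.map (· + 1)) = downWeight (h + 1) ds := by
  simp only [downWeight, List.length_map]
  refine prod_congr rfl fun i hi => ?_
  rw [List.getD_eq_getElem _ _ (by simpa using hi), List.getElem_map,
    List.getD_eq_getElem _ _ (mem_range.1 hi), add_assoc, add_comm 1]

theorem downWeight_one_cons_map_succ (h : ℕ) (ds : List ℕ) :
    downWeight (h + 1) (1 :: ds.map (· + 1)) = X ^ h * qint (h + 1) * downWeight h ds := by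
  rw [downWeight, downWeight, List.length_cons, List.length_map, prod_range_succ', mul_comm]
  refine congrArg₂ (· * ·) ?_ ?_
  · rw [List.getD_cons_zero, show h + 1 + 1 - 2 * (0 + 1) = h by omega]
  · refine prod_congr rfl fun i hi => ?_
    rw [List.getD_cons_succ, List.getD_eq_getElem _ _ (by simpa using hi), List.getElem_map,
      List.getD_eq_getElem _ _ (mem_range.1 hi)]
    congr 2 <;> omega

noncomputable def dyckSum (m h : ℕ) : ℤ[X] :=
  ∑ δ ∈ univ.filter (fun δ : Fin m → Step => IsDyckFrom h δ),
    downWeight h (downPositions δ)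

theorem dyckSum_zero_zero : dyckSum 0 0 = 1 := by
  simp [dyckSum, IsDyckFrom, downWeight, downPositions]

theorem dyckSum_eq_zero_of_lt {m h : ℕ} (hmh : m < h) : dyckSum m h = 0 :=
  sum_eq_zero fun _ hδ => absurd (mem_filter.1 hδ).2.le_length (by omega)

theorem dyckSum_succ (m h : ℕ) :
    dyckSum (m + 1) h = dyckSum m (h + 1) +
      ∑ δ ∈ univ.filter
          (fun δ : Fin m → Step => IsDyckFrom h (Fin.cons Step.D δ : Fin (m + 1) → Step)),
        downWeight h (1 :: (downPositions δ).map (· + 1)) := by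
  simp only [dyckSum, sum_filter]
  rw [Fin.sum_pi_succ_eq_sum_cons, sum_univ_step]
  simp [isDyckFrom_cons_U, not_isDyckFrom_cons_L, downPositions_cons, downWeight_map_succ]

theorem dyckSum_succ_zero (m : ℕ) : dyckSum (m + 1) 0 = dyckSum m 1 := by
  simp [dyckSum_succ, not_isDyckFrom_zero_cons_D]

theorem dyckSum_succ_succ (m h : ℕ) :
    dyckSum (m + 1) (h + 1) = dyckSum m (h + 2) + X ^ h * qint (h + 1) * dyckSum m h := by
  rw [dyckSum_succ]
  simp only [isDyckFrom_succ_cons_D, downWeight_one_cons_map_succ, dyckSum, mul_sum]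

theorem dyckSum_add_two_mul (h t : ℕ) :
    dyckSum (h + 2 * t) h =
      X ^ h.choose 2 * (∏ k ∈ range t, qint (2 * k + 1)) *
        ∏ j ∈ range h, qint (2 * t + 1 + j) := by
  induction t generalizing h with
  | zero =>
    induction h with
    | zero => simp [dyckSum_zero_zero]
    | succ h ih =>
      simp only [Nat.mul_zero, Nat.add_zero, zero_add] at ih ⊢
      rw [dyckSum_succ_succ, dyckSum_eq_zero_of_lt (by omega), ih, Nat.succ_choose_two,
        prod_range_succ, add_comm 1 h]
      ring
  | succ s ihs =>
    induction h with
    | zero =>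
      rw [show 0 + 2 * (s + 1) = 1 + 2 * s + 1 by ring, dyckSum_succ_zero, ihs, prod_range_succ _ s]
      simp
    | succ h ih =>
      have key := qint_add (h + 1) (2 * s + 2)
      rw [show h + 1 + (2 * s + 2) = 2 * (s + 1) + 1 + h by ring] at key
      rw [show h + 1 + 2 * (s + 1) = h + 2 + 2 * s + 1 by ring, dyckSum_succ_succ, ihs,
        show h + 2 + 2 * s = h + 2 * (s + 1) by ring, ih, Nat.succ_choose_two (h + 1),
        Nat.succ_choose_two h, prod_range_succ' _ (h + 1), prod_range_succ' _ h,
        prod_range_succ _ s, prod_range_succ _ h, key]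
      simp only [show ∀ j, 2 * s + 1 + (j + 1 + 1) = 2 * (s + 1) + 1 + j by intro j; ring]
      ring

/-- Watson's identity:
`Σ_{δ ∈ D_{2n}} ∏_{i=1}^n q^{d_i(δ) - 2i} [d_i(δ) - 2i + 1]_q = ∏_{k=1}^n [2k-1]_q`. -/
theorem watson_identity (n : ℕ) :
    ∑ δ ∈ Finset.univ.filter (fun δ : Fin (2 * n) → Step => IsDyck δ),
      ∏ i ∈ Finset.range n,
        (X : Polynomial ℤ) ^ (dpos δ i - 2 * (i + 1))
          * qint (dpos δ i - 2 * (i + 1) + 1)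
    = ∏ k ∈ Finset.range n, qint (2 * k + 1) := by
  have hweight : ∀ δ ∈ univ.filter (fun δ : Fin (2 * n) → Step => IsDyck δ),
      ∏ i ∈ range n,
          (X : ℤ[X]) ^ (dpos δ i - 2 * (i + 1)) * qint (dpos δ i - 2 * (i + 1) + 1) =
        downWeight 0 (downPositions δ) := by
    intro δ hδ
    have hcard := ((isDyck_iff_isDyckFrom_zero δ).1 (mem_filter.1 hδ).2).two_mul_card_down
    rw [downWeight, length_downPositions, show #{j | δ j = Step.D} = n by omega]
    simp only [zero_add, dpos_eq_getD_downPositions]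
  have hsum := dyckSum_add_two_mul 0 n
  rw [zero_add, dyckSum] at hsum
  rw [sum_congr rfl hweight]
  simpa [isDyck_iff_isDyckFrom_zero] using hsum
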